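/- Let w be a weight structure on a triangulated category C. Then the heart C^{w=0} generates the bounded part C^b as a triangulated category: every object of C^b = (∪_{i∈ℤ} C^{w≤i}) ∩ (∪_{i∈ℤ} C^{w≥i}) belongs to the smallest strictly full triangulated subcategory of C containing all objects of C^{w=0}. -/

import Mathlib

open CategoryTheory CategoryTheory.Limits CategoryTheory.Pretriangulated ZeroObject

universe v u

variable (C : Type u) [Category.{v} C] [HasZeroObject C] [HasShift C ℤ] [Preadditive C]
  [∀ n : ℤ, (shiftFunctor C n).Additive] [Pretriangulated C]

/-- `X` is a retract of `Y` in `C`: the identity of `X` factors through `Y`. -/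
def IsRetractOf (X Y : C) : Prop :=
  ∃ (i : X ⟶ Y) (r : Y ⟶ X), i ≫ r = 𝟙 X

/-- A weight structure on the triangulated category `C` (Bondarko).
`LE` is the class `C^{w≤0}`, `GE` is the class `C^{w≥0}`. -/
structure WeightStructure where
  /-- the class `C^{w≤0}` -/
  LE : Set C
  /-- the class `C^{w≥0}` -/
  GE : Set C
  zero_mem_LE : (0 : C) ∈ LE
  zero_mem_GE : (0 : C) ∈ GE
  sum_mem_LE : ∀ X Y : C, X ∈ LE → Y ∈ LE → (X ⊞ Y) ∈ LE
  sum_mem_GE : ∀ X Y : C, X ∈ GE → Y ∈ GE → (X ⊞ Y) ∈ GE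
  retract_mem_LE : ∀ X Y : C, IsRetractOf C X Y → Y ∈ LE → X ∈ LE
  retract_mem_GE : ∀ X Y : C, IsRetractOf C X Y → Y ∈ GE → X ∈ GE
  shift_mem_LE : ∀ X : C, X ∈ LE → X⟦(1 : ℤ)⟧ ∈ LE
  shift_mem_GE : ∀ X : C, X ∈ GE → X⟦(-1 : ℤ)⟧ ∈ GE
  orthogonal : ∀ X Y : C, X ∈ GE → Y ∈ LE → ∀ f : X ⟶ Y⟦(1 : ℤ)⟧, f = 0
  exists_weight_decomposition : ∀ X : C, ∃ (A B : C) (g : X ⟶ A) (f : A ⟶ B)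
    (h : B ⟶ X⟦(1 : ℤ)⟧), A ∈ LE ∧ B ∈ GE ∧ Triangle.mk g f h ∈ distTriang C


/-- The closure properties of (the object class of) a strictly full triangulated
subcategory of `C`: contains `0`, closed under isomorphisms, shifts, and cones. -/
def IsTriangulatedClass (S : Set C) : Prop :=
  ((0 : C) ∈ S) ∧
  (∀ X Y : C, X ∈ S → Nonempty (X ≅ Y) → Y ∈ S) ∧
  (∀ (X : C) (n : ℤ), X ∈ S → X⟦n⟧ ∈ S) ∧
  (∀ T : Triangle C, (T ∈ distTriang C) → T.obj₁ ∈ S → T.obj₂ ∈ S → T.obj₃ ∈ S)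

section Aux

variable {C}
variable (w : WeightStructure C)

lemma mem_LE_of_iso {X Y : C} (e : X ≅ Y) (h : Y ∈ w.LE) : X ∈ w.LE :=
  w.retract_mem_LE _ _ ⟨e.hom, e.inv, e.hom_inv_id⟩ h

lemma mem_GE_of_iso {X Y : C} (e : X ≅ Y) (h : Y ∈ w.GE) : X ∈ w.GE :=
  w.retract_mem_GE _ _ ⟨e.hom, e.inv, e.hom_inv_id⟩ h

/-- `Hom(C^{w≥1}, C^{w≤0}) = 0`. -/
lemma hom_zero_of_shift {Q Y : C} (hQ : Q ∈ w.GE) (hY : Y ∈ w.LE)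
    (φ : Q⟦(-1 : ℤ)⟧ ⟶ Y) : φ = 0 := by
  have hψ : (shiftNegShift Q (1 : ℤ)).inv ≫ (φ⟦(1 : ℤ)⟧') = 0 :=
    w.orthogonal _ _ hQ hY _
  have : (φ⟦(1 : ℤ)⟧') = 0 := by
    rw [Iso.inv_comp_eq, comp_zero] at hψ
    exact hψ
  apply (shiftFunctor C (1 : ℤ)).map_injective
  simpa using this

/-- `C^{w≤0}` is closed under extensions. -/
lemma ext_LE (T : Triangle C) (hT : T ∈ distTriang C)
    (h1 : T.obj₁ ∈ w.LE) (h3 : T.obj₃ ∈ w.LE) : T.obj₂ ∈ w.LE := by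
  obtain ⟨P, Q, g, f, h, hP, hQ, hd⟩ := w.exists_weight_decomposition T.obj₂
  have hzero : ∀ φ : Q⟦(-1 : ℤ)⟧ ⟶ T.obj₂, φ = 0 := by
    intro φ
    have h2 : φ ≫ T.mor₂ = 0 := hom_zero_of_shift w hQ h3 _
    obtain ⟨ψ, hψ⟩ := Triangle.coyoneda_exact₂ T hT φ h2
    rw [hψ, hom_zero_of_shift w hQ h1 ψ, zero_comp]
  have hd' := inv_rot_of_distTriang _ hd
  have hm : (Triangle.mk g f h).invRotate.mor₁ = 0 := hzero _
  obtain ⟨r, hr⟩ := Triangle.yoneda_exact₂ _ hd'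
    (𝟙 T.obj₂ : (Triangle.mk g f h).invRotate.obj₂ ⟶ T.obj₂)
    (by rw [hm]; exact zero_comp)
  exact w.retract_mem_LE _ _ ⟨_, r, hr.symm⟩ hP

/-- `C^{w≥0}` is closed under extensions. -/
lemma ext_GE (T : Triangle C) (hT : T ∈ distTriang C)
    (h1 : T.obj₁ ∈ w.GE) (h3 : T.obj₃ ∈ w.GE) : T.obj₂ ∈ w.GE := by
  obtain ⟨P, Q, g, f, h, hP, hQ, hd⟩ :=
    w.exists_weight_decomposition (T.obj₂⟦(-1 : ℤ)⟧)
  have hd' := inv_rot_of_distTriang _ hd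
  have hT₁ := Triangle.shift_distinguished _ hd' (1 : ℤ)
  set T₁ := (CategoryTheory.shiftFunctor (Triangle C) (1 : ℤ)).obj
    ((invRotate C).obj (Triangle.mk g f h)) with hT₁def
  -- `T₁` is a distinguished triangle `Q⟦-1⟧⟦1⟧ ⟶ T.obj₂⟦-1⟧⟦1⟧ ⟶ P⟦1⟧`
  have hzero : ∀ φ : (T.obj₂⟦(-1 : ℤ)⟧)⟦(1 : ℤ)⟧ ⟶ P⟦(1 : ℤ)⟧, φ = 0 := by
    intro φ
    have e : T.obj₂ ≅ (T.obj₂⟦(-1 : ℤ)⟧)⟦(1 : ℤ)⟧ := (shiftNegShift T.obj₂ (1 : ℤ)).symm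
    have hψ0 : T.mor₁ ≫ (e.hom ≫ φ) = 0 := w.orthogonal _ _ h1 hP _
    obtain ⟨χ, hχ⟩ := Triangle.yoneda_exact₂ T hT (e.hom ≫ φ) hψ0
    have hχ0 : χ = 0 := w.orthogonal _ _ h3 hP _
    have : e.hom ≫ φ = 0 := by rw [hχ, hχ0, comp_zero]
    calc φ = e.inv ≫ (e.hom ≫ φ) := by rw [← Category.assoc, e.inv_hom_id, Category.id_comp]
    _ = 0 := by rw [this, comp_zero]
  have hm : T₁.mor₂ = 0 := hzero _
  obtain ⟨s, hs⟩ := Triangle.coyoneda_exact₂ T₁ hT₁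
    (𝟙 ((T.obj₂⟦(-1 : ℤ)⟧)⟦(1 : ℤ)⟧) : _ ⟶ T₁.obj₂) (by rw [hm]; exact comp_zero)
  have hQ' : (Q⟦(-1 : ℤ)⟧)⟦(1 : ℤ)⟧ ∈ w.GE :=
    mem_GE_of_iso w (shiftNegShift Q (1 : ℤ)) hQ
  have hmem : (T.obj₂⟦(-1 : ℤ)⟧)⟦(1 : ℤ)⟧ ∈ w.GE :=
    w.retract_mem_GE _ _ ⟨s, _, hs.symm⟩ hQ'
  exact mem_GE_of_iso w (shiftNegShift T.obj₂ (1 : ℤ)).symm hmem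

lemma shift_LE_of_le {X : C} {i i' : ℤ} (hle : i ≤ i') (hX : X⟦i⟧ ∈ w.LE) :
    X⟦i'⟧ ∈ w.LE := by
  obtain ⟨k, rfl⟩ := Int.le.dest hle
  clear hle
  induction k with
  | zero => simpa using hX
  | succ k ih =>
    have h1 : (X⟦i + (k : ℤ)⟧)⟦(1 : ℤ)⟧ ∈ w.LE := w.shift_mem_LE _ ih
    exact mem_LE_of_iso w
      ((shiftFunctorAdd' C (i + (k : ℤ)) 1 (i + ((k + 1 : ℕ) : ℤ))
        (by push_cast; ring)).app X) h1

lemma shift_GE_of_ge {X : C} {j j' : ℤ} (hle : j' ≤ j) (hX : X⟦j⟧ ∈ w.GE) :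
    X⟦j'⟧ ∈ w.GE := by
  obtain ⟨k, rfl⟩ := Int.le.dest hle
  clear hle
  induction k with
  | zero => simpa using hX
  | succ k ih =>
    apply ih
    have h1 : (X⟦j' + ((k + 1 : ℕ) : ℤ)⟧)⟦(-1 : ℤ)⟧ ∈ w.GE := w.shift_mem_GE _ hX
    exact mem_GE_of_iso w
      ((shiftFunctorAdd' C (j' + ((k + 1 : ℕ) : ℤ)) (-1) (j' + (k : ℤ))
        (by push_cast; ring)).app X) h1

lemma key_induction (S : Set C) (hS : IsTriangulatedClass C S)
    (hheart : w.LE ∩ w.GE ⊆ S) :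
    ∀ (n : ℕ) (X : C) (j : ℤ), X⟦j + (n : ℤ)⟧ ∈ w.LE → X⟦j⟧ ∈ w.GE → X ∈ S := by
  intro n
  induction n with
  | zero =>
    intro X j h1 h2
    have h1' : X⟦j⟧ ∈ w.LE := by simpa using h1
    have hXj : X⟦j⟧ ∈ S := hheart ⟨h1', h2⟩
    have h3 : (X⟦j⟧)⟦-j⟧ ∈ S := hS.2.2.1 _ _ hXj
    exact hS.2.1 _ _ h3 ⟨shiftShiftNeg X j⟩
  | succ n ih =>
    intro X j h1 h2
    obtain ⟨P, Q, g, f, h, hP, hQ, hd⟩ :=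
      w.exists_weight_decomposition (X⟦j + (n : ℤ)⟧)
    have hZ1 : (X⟦j + (n : ℤ)⟧)⟦(1 : ℤ)⟧ ∈ w.LE :=
      mem_LE_of_iso w ((shiftFunctorAdd' C (j + (n : ℤ)) 1 (j + ((n + 1 : ℕ) : ℤ))
        (by push_cast; ring)).app X).symm h1
    have hZn : (X⟦j + (n : ℤ)⟧)⟦-(n : ℤ)⟧ ∈ w.GE :=
      mem_GE_of_iso w ((shiftFunctorAdd' C (j + (n : ℤ)) (-(n : ℤ)) j
        (by ring)).app X).symm h2
    -- Q is in the heart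
    have hQLE : Q ∈ w.LE := ext_LE w _ (rot_of_distTriang _ hd) hP hZ1
    -- P has smaller weight range : P ∈ C^{w≤0} ∩ C^{w≥-n}
    have hQn : Q⟦-(n : ℤ)⟧ ∈ w.GE := by
      apply shift_GE_of_ge w (j := 0) (by simp)
      exact mem_GE_of_iso w ((shiftFunctorZero C ℤ).app Q) hQ
    have hTn := Triangle.shift_distinguished _ hd (-(n : ℤ))
    have hPn : P⟦-(n : ℤ)⟧ ∈ w.GE := ext_GE w _ hTn hZn hQn
    have hPLE : P⟦-(n : ℤ) + (n : ℤ)⟧ ∈ w.LE := by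
      have e : P⟦-(n : ℤ) + (n : ℤ)⟧ ≅ P := by
        have hz : -(n : ℤ) + (n : ℤ) = 0 := by ring
        rw [hz]
        exact (shiftFunctorZero C ℤ).app P
      exact mem_LE_of_iso w e hP
    have hPS : P ∈ S := ih P (-(n : ℤ)) hPLE hPn
    have hQS : Q ∈ S := hheart ⟨hQLE, hQ⟩
    -- conclude with the rotated decomposition triangle `P ⟶ Q ⟶ Z⟦1⟧`
    have hZ1S : (X⟦j + (n : ℤ)⟧)⟦(1 : ℤ)⟧ ∈ S :=
      hS.2.2.2 _ (rot_of_distTriang _ hd) hPS hQS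
    have hZS : X⟦j + (n : ℤ)⟧ ∈ S := by
      have := hS.2.2.1 _ (-1 : ℤ) hZ1S
      exact hS.2.1 _ _ this ⟨shiftShiftNeg (X⟦j + (n : ℤ)⟧) (1 : ℤ)⟩
    have := hS.2.2.1 _ (-(j + (n : ℤ))) hZS
    exact hS.2.1 _ _ this ⟨shiftShiftNeg X (j + (n : ℤ))⟩

end Aux

/-- the heart `C^{w=0}` generates `C^b` as a triangulated category:
every bounded object lies in every (object class of a) strictly full
triangulated subcategory containing the heart. -/
theorem weightStructure_heart_generates_bounded (w : WeightStructure C)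
    (X : C) (hX₁ : ∃ i : ℤ, X⟦i⟧ ∈ w.LE) (hX₂ : ∃ i : ℤ, X⟦i⟧ ∈ w.GE)
    (S : Set C) (hS : IsTriangulatedClass C S) (hheart : w.LE ∩ w.GE ⊆ S) :
    X ∈ S := by
  obtain ⟨i, hi⟩ := hX₁
  obtain ⟨j, hj⟩ := hX₂
  have h1 : X⟦max i j⟧ ∈ w.LE := shift_LE_of_le w (le_max_left i j) hi
  obtain ⟨n, hn⟩ := Int.le.dest (le_max_right i j)
  refine key_induction w S hS hheart n X j ?_ hj
  rw [hn]
  exact h1
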